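/- arXiv:2306.16815 — 4 statements merged into one kernel-verified Lean document; each statement's English description precedes it below -/
import Mathlib

section
/- Let e : V → Σ* be an injective map whose image {e(X) : X ∈ V} is a fix-free set of strings, and let S ⊆ V* be a fix-free set of sequences over V. Then the map e* is injective on S and the set {e*(F) : F ∈ S} is a fix-free set of strings over Σ. -/
/-- A set of strings is fix-free if no member is a prefix or a suffix of another member. -/
def FixFree {A : Type*} (S : Set (List A)) : Prop :=
  ∀ F ∈ S, ∀ Q ∈ S, F ≠ Q → ¬ F <+: Q ∧ ¬ F <:+ Q

/-- The monoid homomorphism `e* : V* → Σ*` induced by `e : V → Σ*`. -/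
def expand {V A : Type*} (e : V → List A) (F : List V) : List A := (F.map e).flatten

lemma expand_cons {V A : Type*} (e : V → List A) (x : V) (F : List V) :
    expand e (x :: F) = e x ++ expand e F := by simp [expand]

lemma expand_nil {V A : Type*} (e : V → List A) : expand e ([] : List V) = [] := rfl

/-- Lifting prefixes along `expand`. -/
lemma lift_prefix {V A : Type*} (e : V → List A)
    (hcomp : ∀ X Y : V, e X <+: e Y → X = Y) (hne : ∀ X : V, e X ≠ []) :
    ∀ F Q : List V, expand e F <+: expand e Q → F <+: Q := by
  intro F
  induction F with
  | nil => intro Q _; exact Q.nil_prefix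
  | cons X F' ih =>
    intro Q h
    cases Q with
    | nil =>
      exfalso
      rw [expand_nil, List.prefix_nil, expand_cons, List.append_eq_nil_iff] at h
      exact hne X h.1
    | cons Y Q' =>
      rw [expand_cons, expand_cons] at h
      have hX : e X <+: e Y ++ expand e Q' := ((e X).prefix_append _).trans h
      have hY : e Y <+: e Y ++ expand e Q' := (e Y).prefix_append _
      have hXY : X = Y := by
        rcases List.prefix_or_prefix_of_prefix hX hY with h' | h'
        · exact hcomp X Y h'
        · exact (hcomp Y X h').symm
      subst hXY
      have h' : expand e F' <+: expand e Q' := (List.prefix_append_right_inj _).mp h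
      exact List.cons_prefix_cons.mpr ⟨rfl, ih Q' h'⟩

/-- Lifting suffixes along `expand`. -/
lemma lift_suffix {V A : Type*} (e : V → List A)
    (hcomp : ∀ X Y : V, e X <:+ e Y → X = Y) (hne : ∀ X : V, e X ≠ []) :
    ∀ F Q : List V, expand e F <:+ expand e Q → F <:+ Q := by
  have key : ∀ F : List V, (expand e F).reverse = expand (fun x => (e x).reverse) F.reverse := by
    intro F
    induction F with
    | nil => rfl
    | cons X F' ih =>
      rw [expand_cons, List.reverse_append, ih, List.reverse_cons]
      simp [expand]
  intro F Q h
  rw [← List.reverse_prefix] at h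
  rw [key, key] at h
  have := lift_prefix (fun x => (e x).reverse)
    (fun X Y h' => hcomp X Y (by rwa [List.reverse_prefix] at h'))
    (fun X h' => hne X (by simpa using congrArg List.reverse h'))
    F.reverse Q.reverse h
  rwa [List.reverse_prefix] at this

/-- if `e : V → Σ*` is injective with fix-free image, and `S ⊆ V*` is a
fix-free set of sequences, then `e*` is injective on `S` and `e* '' S` is fix-free. -/
theorem stmt_3 {V A : Type*} (e : V → List A)
    (he : Function.Injective e) (himage : FixFree (Set.range e))
    (S : Set (List V)) (hS : FixFree S) :
    Set.InjOn (expand e) S ∧ FixFree (expand e '' S) := by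
  by_cases hdeg : ∃ X : V, e X = []
  · -- degenerate case: some code is empty, so all codes are empty and V is a subsingleton
    obtain ⟨X0, hX0⟩ := hdeg
    have hall : ∀ Y : V, e Y = [] := by
      intro Y
      by_contra hY
      have hne : e X0 ≠ e Y := by rw [hX0]; exact fun h => hY h.symm
      exact (himage (e X0) ⟨X0, rfl⟩ (e Y) ⟨Y, rfl⟩ hne).1 (by rw [hX0]; exact (e Y).nil_prefix)
    haveI : Subsingleton V := ⟨fun a b => he (by rw [hall a, hall b])⟩
    -- any two members of S are comparable as prefixes, hence S is a subsingleton
    have hsub : ∀ F ∈ S, ∀ Q ∈ S, F = Q := by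
      intro F hF Q hQ
      by_contra hne
      have pref : ∀ L M : List V, L.length ≤ M.length → L <+: M := by
        intro L M hl
        have hLM : L = M.take L.length := by
          apply List.ext_getElem
          · simp [hl]
          · intros; exact Subsingleton.elim _ _
        rw [hLM]; exact M.take_prefix _
      rcases le_or_gt F.length Q.length with hl | hl
      · exact (hS F hF Q hQ hne).1 (pref F Q hl)
      · exact (hS Q hQ F hF (Ne.symm hne)).1 (pref Q F hl.le)
    constructor
    · intro F hF Q hQ _; exact hsub F hF Q hQ
    · intro F' hF' Q' hQ' hne
      exfalso
      obtain ⟨F, hF, rfl⟩ := hF'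
      obtain ⟨Q, hQ, rfl⟩ := hQ'
      exact hne (by rw [hsub F hF Q hQ])
  · push_neg at hdeg
    have hcompP : ∀ X Y : V, e X <+: e Y → X = Y := by
      intro X Y h
      by_contra hXY
      exact (himage (e X) ⟨X, rfl⟩ (e Y) ⟨Y, rfl⟩ (fun h' => hXY (he h'))).1 h
    have hcompS : ∀ X Y : V, e X <:+ e Y → X = Y := by
      intro X Y h
      by_contra hXY
      exact (himage (e X) ⟨X, rfl⟩ (e Y) ⟨Y, rfl⟩ (fun h' => hXY (he h'))).2 h
    have inj : Set.InjOn (expand e) S := by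
      intro F hF Q hQ h
      by_contra hne
      exact (hS F hF Q hQ hne).1 (lift_prefix e hcompP hdeg F Q (h ▸ List.prefix_refl _))
    refine ⟨inj, ?_⟩
    intro F' hF' Q' hQ' hne
    obtain ⟨F, hF, rfl⟩ := hF'
    obtain ⟨Q, hQ, rfl⟩ := hQ'
    have hFQ : F ≠ Q := fun h => hne (by rw [h])
    constructor
    · exact fun h => (hS F hF Q hQ hFQ).1 (lift_prefix e hcompP hdeg F Q h)
    · exact fun h => (hS F hF Q hQ hFQ).2 (lift_suffix e hcompS hdeg F Q h)
end

section
/- Let e : V → Σ* be an injective map such that for any two distinct X, Y ∈ V, e(X) is not a prefix of e(Y). Let u, v ∈ V* be sequences that share a common prefix of exactly l symbols over V, i.e., u[1..l] = v[1..l] and both u[l+1] and v[l+1] exist with u[l+1] ≠ v[l+1]. Then lcp(e*(u), e*(v)) = |e*(u[1..l])| + lcp(e(u[l+1]), e(v[l+1])). -/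
/-- Length of the longest common prefix of two strings (lists). -/
def lcp {A : Type*} [DecidableEq A] : List A → List A → ℕ
  | a :: s, b :: t => if a = b then lcp s t + 1 else 0
  | _, _ => 0

lemma lcp_append_same {A : Type*} [DecidableEq A] (p s t : List A) :
    lcp (p ++ s) (p ++ t) = p.length + lcp s t := by
  induction p with
  | nil => simp
  | cons a p ih => simp [lcp, ih]; omega

lemma lcp_append_of_not_prefix {A : Type*} [DecidableEq A] :
    ∀ (a b s t : List A), ¬ a <+: b → ¬ b <+: a →
    lcp (a ++ s) (b ++ t) = lcp a b
  | [], b, _, _, h1, _ => absurd (List.nil_prefix) h1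
  | a, [], _, _, _, h2 => absurd (List.nil_prefix) h2
  | x :: a, y :: b, s, t, h1, h2 => by
    by_cases hxy : x = y
    · subst hxy
      have h := lcp_append_of_not_prefix a b s t
        (fun h => h1 (List.cons_prefix_cons.mpr ⟨rfl, h⟩))
        (fun h => h2 (List.cons_prefix_cons.mpr ⟨rfl, h⟩))
      simp [lcp, h]
    · simp [lcp, hxy]

lemma expand_append {V A : Type*} (e : V → List A) (p q : List V) :
    expand e (p ++ q) = expand e p ++ expand e q := by
  simp [expand]

/-- if the images of the injective map `e` are mutually non-prefix, and
`u, v` share a common prefix of exactly `l` symbols (1-indexed symbols `u[l+1] = X` and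
`v[l+1] = Y` exist and differ), then
`lcp (e* u) (e* v) = |e* (u[1..l])| + lcp (e X) (e Y)`. -/
theorem stmt_13 {V A : Type*} [DecidableEq V] [DecidableEq A]
    (e : V → List A) (he : Function.Injective e)
    (hpf : ∀ X Y : V, X ≠ Y → ¬ e X <+: e Y)
    (u v : List V) (l : ℕ)
    (hpre : u.take l = v.take l)
    (X Y : V) (hX : u[l]? = some X) (hY : v[l]? = some Y) (hXY : X ≠ Y) :
    lcp (expand e u) (expand e v) = (expand e (u.take l)).length + lcp (e X) (e Y) := by
  have hlu : l < u.length := by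
    by_contra h
    simp [List.getElem?_eq_none (le_of_not_gt h)] at hX
  have hlv : l < v.length := by
    by_contra h
    simp [List.getElem?_eq_none (le_of_not_gt h)] at hY
  have hXu : u[l] = X := by simpa [List.getElem?_eq_getElem hlu] using hX
  have hYv : v[l] = Y := by simpa [List.getElem?_eq_getElem hlv] using hY
  have hu : u = u.take l ++ X :: u.drop (l + 1) := by
    conv_lhs => rw [← List.take_append_drop l u]
    rw [List.drop_eq_getElem_cons hlu, hXu]
  have hv : v = u.take l ++ Y :: v.drop (l + 1) := by
    conv_lhs => rw [← List.take_append_drop l v]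
    rw [List.drop_eq_getElem_cons hlv, hYv, hpre]
  conv_lhs => rw [hu, hv]
  rw [expand_append, expand_append]
  have hcons : ∀ (Z : V) (q : List V), expand e (Z :: q) = e Z ++ expand e q := by
    intro Z q; simp [expand]
  rw [hcons, hcons, lcp_append_same,
    lcp_append_of_not_prefix _ _ _ _ (hpf X Y hXY) (hpf Y X hXY.symm)]
end

section
/- Let s_1, s_2, …, s_n be strings over a linearly ordered alphabet sorted in non-decreasing lexicographic order, i.e., s_{k−1} ≤_lex s_k for all 2 ≤ k ≤ n. Then for all 1 ≤ i < j ≤ n, lcp(s_i, s_j) = min over i < k ≤ j of lcp(s_{k−1}, s_k); that is, the length of the longest common prefix of two strings in the sorted order equals the minimum of the longest-common-prefix values of consecutive pairs between them. -/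
private lemma cons_le_cons_iff' {A : Type*} [LinearOrder A] (a b : A) (l t : List A) :
    (a::l) ≤ (b::t) ↔ a < b ∨ (a = b ∧ l ≤ t) := by
  rw [le_iff_lt_or_eq, le_iff_lt_or_eq]
  constructor
  · rintro (h | h)
    · cases h with
      | cons h => exact Or.inr ⟨rfl, Or.inl h⟩
      | rel h => exact Or.inl h
    · injection h with h1 h2; exact Or.inr ⟨h1, Or.inr h2⟩
  · rintro (h | ⟨rfl, h | rfl⟩)
    · exact Or.inl (List.Lex.rel h)
    · exact Or.inl (List.Lex.cons h)
    · exact Or.inr rfl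

private lemma not_cons_le_nil' {A : Type*} [LinearOrder A] (a : A) (l : List A) :
    ¬ (a::l ≤ ([]:List A)) := by
  rw [le_iff_lt_or_eq]
  rintro (h | h)
  · cases h
  · simp at h

private lemma lcp_min {A : Type*} [LinearOrder A] :
    ∀ (a b c : List A), a ≤ b → b ≤ c → lcp a c = min (lcp a b) (lcp b c)
  | [], b, c, _, _ => by cases c <;> simp [lcp]
  | x :: a', [], c, hab, _ => absurd hab (not_cons_le_nil' _ _)
  | x :: a', y :: b', [], _, hbc => absurd hbc (not_cons_le_nil' _ _)
  | x :: a', y :: b', z :: c', hab, hbc => by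
    rw [cons_le_cons_iff'] at hab hbc
    rcases hab with hxy | ⟨rfl, hab⟩
    · have hxz : x < z := by
        rcases hbc with h | ⟨rfl, _⟩
        · exact hxy.trans h
        · exact hxy
      simp [lcp, hxy.ne, hxz.ne]
    · rcases hbc with hyz | ⟨rfl, hbc⟩
      · simp [lcp, hyz.ne]
      · simp only [lcp, if_pos rfl]
        rw [lcp_min a' b' c' hab hbc]
        exact (min_add_add_right _ _ 1).symm

/-- for strings `s 1 ≤_lex s 2 ≤_lex ⋯ ≤_lex s n` sorted in non-decreasing
lexicographic order, the lcp of `s i` and `s j` (for `1 ≤ i < j ≤ n`) equals the minimum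
of the lcp values of consecutive pairs `s (k-1), s k` over `i < k ≤ j`. -/
theorem stmt_15 {A : Type*} [LinearOrder A]
    (n : ℕ) (s : ℕ → List A)
    (hsorted : ∀ k, 2 ≤ k → k ≤ n → s (k - 1) ≤ s k) :
    ∀ i j, 1 ≤ i → ∀ hij : i < j, j ≤ n →
      lcp (s i) (s j) =
        (Finset.Icc (i + 1) j).inf' ⟨j, by simp [Nat.succ_le_of_lt hij]⟩
          (fun k => lcp (s (k - 1)) (s k)) := by
  intro i j hi
  induction j with
  | zero => omega
  | succ j ih =>
    intro hij hjn
    rcases Nat.lt_or_ge i j with hij' | hij'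
    · -- i < j, use IH and lcp_min
      have hjn' : j ≤ n := by omega
      have key := ih hij' hjn'
      -- s i ≤ s j
      have mono : ∀ a b, 1 ≤ a → a ≤ b → b ≤ n → s a ≤ s b := by
        intro a b ha hab hbn
        induction b with
        | zero => omega
        | succ b ihb =>
          rcases Nat.lt_or_ge a (b+1) with h | h
          · have h1 : s a ≤ s b := ihb (by omega) (by omega)
            have h2 : s b ≤ s (b+1) := by
              have := hsorted (b+1) (by omega) hbn
              simpa using this
            exact h1.trans h2
          · have : a = b + 1 := by omega
            subst this; exact le_refl _
      have h1 : s i ≤ s j := mono i j hi (by omega) hjn'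
      have h2 : s j ≤ s (j+1) := by
        have := hsorted (j+1) (by omega) hjn
        simpa using this
      rw [lcp_min (s i) (s j) (s (j+1)) h1 h2, key]
      have hsplit : Finset.Icc (i+1) (j+1) = insert (j+1) (Finset.Icc (i+1) j) := by
        ext k; simp [Finset.mem_Icc, Finset.mem_insert]; omega
      have hne : (Finset.Icc (i+1) j).Nonempty := ⟨j, by simp; omega⟩
      simp only [hsplit]
      rw [Finset.inf'_insert hne]
      simp [min_comm]
    · -- i = j
      have : i = j := by omega
      subst this
      have : Finset.Icc (i+1) (i+1) = {i+1} := by simp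
      simp only [this, Finset.inf'_singleton]
      simp
end

section
/- Let h ≥ 1, let V_1, …, V_h be alphabets, let e_1 : V_1 → Σ* be an injective map whose image is a fix-free set of strings over Σ, and for each 2 ≤ i ≤ h let e_i : V_i → V_{i−1}* be an injective map whose image is a fix-free set of sequences over V_{i−1}. Define E_1 = e_1 and, for 2 ≤ i ≤ h, E_i = (E_{i−1})* ∘ e_i : V_i → Σ*. Then for every 1 ≤ i ≤ h, E_i is injective and the set {E_i(X) : X ∈ V_i} is a fix-free set of strings over Σ; that is, a fully-balanced grammar whose right-hand sides at each level form fix-free sets of sequences is a fix-free grammar. -/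
/-- The expansion into `Σ*` of a nonterminal of level `i + 1` of a fully-balanced
grammar: `E 1 = e 1` and `E i = (E (i-1))* ∘ e i` for `i ≥ 2`. Here levels are
reindexed so that level `i + 1` corresponds to index `i`, `e1 : V 1 → Σ*` gives the
rules of level 1, and `e i : V (i+2) → (V (i+1))*` gives the rules of level `i + 2`. -/
def levelExp {A : Type u} (V : ℕ → Type v) (e1 : V 1 → List A)
    (e : (i : ℕ) → V (i + 2) → List (V (i + 1))) : (i : ℕ) → V (i + 1) → List A
  | 0 => e1
  | i + 1 => fun X => ((e i X).map (levelExp V e1 e i)).flatten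

/-- If a code is fix-free and some codeword is empty, every codeword is empty. -/
lemma ff_nil {A B : Type*} {f : B → List A} (hff : FixFree (Set.range f))
    {b0 : B} (hb0 : f b0 = []) : ∀ b, f b = [] := by
  intro b
  by_contra hne
  have := (hff (f b0) ⟨b0, rfl⟩ (f b) ⟨b, rfl⟩ (by simp [hb0, Ne.symm hne])).1
  exact this (by simp [hb0])

/-- Strong prefix property of fix-free codes with no empty codeword. -/
lemma key_prefix {A B : Type*} {f : B → List A} (hinj : Function.Injective f)
    (hff : FixFree (Set.range f)) (hne : ∀ b, f b ≠ []) :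
    ∀ L M : List B, (L.map f).flatten <+: (M.map f).flatten → L <+: M := by
  intro L
  induction L with
  | nil => intro M _; exact List.nil_prefix
  | cons x L' ih =>
    intro M hp
    cases M with
    | nil =>
      exfalso
      simp only [List.map_nil, List.flatten_nil, List.prefix_nil] at hp
      simp only [List.map_cons, List.flatten_cons, List.append_eq_nil_iff] at hp
      exact hne x hp.1
    | cons y M' =>
      simp only [List.map_cons, List.flatten_cons] at hp
      have hx : f x <+: f y ++ (M'.map f).flatten :=
        (List.prefix_append (f x) _).trans hp
      have hy : f y <+: f y ++ (M'.map f).flatten := List.prefix_append _ _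
      have hxy : f x = f y := by
        rcases List.prefix_or_prefix_of_prefix hx hy with h | h
        · by_contra hne'
          exact (hff (f x) ⟨x, rfl⟩ (f y) ⟨y, rfl⟩ hne').1 h
        · by_contra hne'
          exact (hff (f y) ⟨y, rfl⟩ (f x) ⟨x, rfl⟩ (Ne.symm hne')).1 h
      have hxyb : x = y := hinj hxy
      rw [hxy] at hp
      have hrest := (List.prefix_append_right_inj (f y)).mp hp
      exact List.cons_prefix_cons.mpr ⟨hxyb, ih M' hrest⟩

/-- The reversed code of a fix-free code is fix-free. -/
lemma ff_reverse {A B : Type*} {f : B → List A} (hff : FixFree (Set.range f)) :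
    FixFree (Set.range fun b => (f b).reverse) := by
  rintro F ⟨b, rfl⟩ Q ⟨b', rfl⟩ hne
  have hne' : f b ≠ f b' := fun h => hne (by simp [h])
  have := hff (f b) ⟨b, rfl⟩ (f b') ⟨b', rfl⟩ hne'
  constructor
  · simp only [List.reverse_prefix]
    exact this.2
  · simp only [List.reverse_suffix]
    exact this.1

/-- The key step: composing two injective fix-free codes yields an injective
fix-free code. -/
lemma step {A B C : Type*} {f : B → List A} {g : C → List B}
    (hfinj : Function.Injective f) (hfff : FixFree (Set.range f))
    (hginj : Function.Injective g) (hgff : FixFree (Set.range g)) :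
    Function.Injective (fun c => ((g c).map f).flatten) ∧
      FixFree (Set.range fun c => ((g c).map f).flatten) := by
  by_cases hdeg : ∃ b0, f b0 = []
  · -- degenerate case: all codewords empty, B and C subsingletons
    obtain ⟨b0, hb0⟩ := hdeg
    have hall : ∀ b, f b = [] := ff_nil hfff hb0
    have hB : ∀ b b' : B, b = b' := fun b b' => hfinj ((hall b).trans (hall b').symm)
    have hC : ∀ c c' : C, c = c' := by
      intro c c'
      apply hginj
      -- any two lists over a subsingleton are prefix-comparable
      have hcomp : ∀ l₁ l₂ : List B, l₁.length ≤ l₂.length → l₁ <+: l₂ := by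
        intro l₁ l₂ hlen
        rw [List.prefix_iff_eq_take]
        apply List.ext_getElem (by simp [hlen])
        intro i h1 h2
        exact hB _ _
      by_contra hne
      rcases Nat.le_total (g c).length (g c').length with hl | hl
      · exact (hgff (g c) ⟨c, rfl⟩ (g c') ⟨c', rfl⟩ hne).1 (hcomp _ _ hl)
      · exact (hgff (g c') ⟨c', rfl⟩ (g c) ⟨c, rfl⟩ (Ne.symm hne)).1 (hcomp _ _ hl)
    have hFnil : ∀ c, ((g c).map f).flatten = [] := by
      intro c
      rw [List.flatten_eq_nil_iff]
      simp only [List.mem_map, forall_exists_index, and_imp]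
      rintro l b _ rfl
      exact hall b
    constructor
    · intro c c' _; exact hC c c'
    · rintro F ⟨c, rfl⟩ Q ⟨c', rfl⟩ hne
      exact absurd ((hFnil c).trans (hFnil c').symm) hne
  · push_neg at hdeg
    have hne : ∀ b, f b ≠ [] := hdeg
    -- prefix direction
    have hpre : ∀ c c' : C, ((g c).map f).flatten <+: ((g c').map f).flatten →
        g c <+: g c' := fun c c' hp => key_prefix hfinj hfff hne _ _ hp
    -- suffix direction via reverse
    have hsuf : ∀ c c' : C, ((g c).map f).flatten <:+ ((g c').map f).flatten →
        g c <:+ g c' := by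
      intro c c' hs
      set f' : B → List A := fun b => (f b).reverse with hf'
      have hf'inj : Function.Injective f' := fun b b' h => hfinj (by
        have := congrArg List.reverse h
        simpa [hf'] using this)
      have hf'ff : FixFree (Set.range f') := ff_reverse hfff
      have hf'ne : ∀ b, f' b ≠ [] := by
        intro b hb
        exact hne b (by simpa [hf'] using congrArg List.reverse hb)
      have hrev : ∀ l : List B, ((l.map f).flatten).reverse
          = ((l.reverse.map f').flatten) := by
        intro l
        rw [List.reverse_flatten]
        simp [hf', List.map_reverse, Function.comp_def]
      have hs' : ((g c).reverse.map f').flatten <+: ((g c').reverse.map f').flatten := by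
        rw [← hrev, ← hrev]
        exact List.reverse_prefix.mpr hs
      have := key_prefix hf'inj hf'ff hf'ne _ _ hs'
      exact List.reverse_prefix.mp (by simpa using this)
    constructor
    · intro c c' hcc
      simp only at hcc
      apply hginj
      exact (hpre c c' (hcc ▸ List.prefix_refl _)).eq_of_length
        (congrArg List.length ((hpre c' c (hcc ▸ List.prefix_refl _)).eq_of_length_le
          (List.IsPrefix.length_le (hpre c c' (hcc ▸ List.prefix_refl _))) ▸ rfl))
    · rintro F ⟨c, rfl⟩ Q ⟨c', rfl⟩ hFQ
      have hne' : g c ≠ g c' := fun h => hFQ (by simp [h])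
      have := hgff (g c) ⟨c, rfl⟩ (g c') ⟨c', rfl⟩ hne'
      exact ⟨fun hp => this.1 (hpre c c' hp), fun hs => this.2 (hsuf c c' hs)⟩

/-- a fully-balanced grammar of height `h ≥ 1` whose level-1 rules
`e1 : V 1 → Σ*` are injective with fix-free image, and whose level-`i` rules
(`2 ≤ i ≤ h`) `V i → (V (i-1))*` are injective with fix-free image as sequences,
has injective level expansions with fix-free images in `Σ*` at every level `i ≤ h`;
i.e., the grammar is fix-free. -/
theorem stmt_17 {A : Type u} (h : ℕ) (hh : 1 ≤ h)
    (V : ℕ → Type v) (e1 : V 1 → List A)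
    (e : (i : ℕ) → V (i + 2) → List (V (i + 1)))
    (he1 : Function.Injective e1) (hff1 : FixFree (Set.range e1))
    (he : ∀ i : ℕ, i + 2 ≤ h → Function.Injective (e i) ∧ FixFree (Set.range (e i))) :
    ∀ i : ℕ, i + 1 ≤ h →
      Function.Injective (levelExp V e1 e i) ∧ FixFree (Set.range (levelExp V e1 e i)) := by
  intro i
  induction i with
  | zero => intro _; exact ⟨he1, hff1⟩
  | succ i ih =>
    intro hi
    have hf := ih (by omega)
    have hg := he i (by omega)
    exact step hf.1 hf.2 hg.1 hg.2
end
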